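/- arXiv:2003.09480 — 3 statements merged into one kernel-verified Lean document; each statement's English description precedes it below -/
import Mathlib

section
/- Every metrizable locally convex space satisfies the strict Mackey convergence condition: for every bounded set A there exists a closed bounded disk D with A ⊆ D such that the topology of the normed space (E_D, ‖·‖_D) agrees with the topology of E on A. -/
variable {E : Type*} [AddCommGroup E] [Module ℝ E] [TopologicalSpace E]

/-- The topology of the gauge norm `‖·‖_D` agrees with the topology of `E` on the set
`A`: at every point of `A`, the induced neighborhood filters coincide. -/
def GaugeTopologyAgreesOn (D A : Set E) : Prop :=
  ∀ x ∈ A, ∀ U : Set E,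
    (∃ ε > 0, {y | y ∈ A ∧ gauge D (y - x) < ε} ⊆ U) ↔ (∃ V ∈ nhds x, V ∩ A ⊆ U)

/-!
Choose a countable basis `U n` of closed absolutely convex neighbourhoods of `0`, numbers
`ρ n > 0` with `A ⊆ ρ n • U n`, and put `D = ⋂ n, ((n + 1) * ρ n) • U n`. Every `U n` absorbs
`D`, so `D` is bounded, and a bounded disk containing `A` makes gauge-small differences of points
of `A` topologically small. Conversely, for `x, y ∈ A` the difference `y - x` lies in
`(2 * ρ n) • U n`, which is contained in `(t * (n + 1) * ρ n) • U n` once `t * (n + 1) ≥ 2`.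
Hence `gauge D (y - x) ≤ t` only requires the finitely many conditions with `t * (n + 1) < 2`,
and each of them holds for `y` close to `x`.
-/

open Set Filter Bornology Pointwise Topology

omit [TopologicalSpace E] in
lemma Balanced.smul_mono_of_nonneg {s : Set E} (hs : Balanced ℝ s) {a b : ℝ} (ha : 0 ≤ a)
    (hab : a ≤ b) : a • s ⊆ b • s :=
  hs.smul_mono <| by rwa [Real.norm_of_nonneg ha, Real.norm_of_nonneg (ha.trans hab)]

omit [TopologicalSpace E] in
lemma Balanced.sub_mem_two_smul {s : Set E} (hs : Balanced ℝ s) (hconv : Convex ℝ s) {a b : E}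
    (ha : a ∈ s) (hb : b ∈ s) : a - b ∈ (2 : ℝ) • s := by
  rw [show (2 : ℝ) = 1 + 1 by norm_num, hconv.add_smul zero_le_one zero_le_one, one_smul,
    sub_eq_add_neg]
  exact add_mem_add ha (hs.neg_mem_iff.2 hb)

omit [TopologicalSpace E] in
/-- The hypothesis `x ∈ b • s` cannot be dropped: off the span of `s` the gauge is `sInf ∅ = 0`. -/
lemma Balanced.mem_smul_of_gauge_lt {s : Set E} (hs : Balanced ℝ s) {x : E} {a b : ℝ}
    (hb : 0 < b) (hx : x ∈ b • s) (h : gauge s x < a) : x ∈ a • s := by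
  rw [gauge_def] at h
  obtain ⟨c, ⟨hc, hxc⟩, hca⟩ := exists_lt_of_csInf_lt (by exact ⟨b, hb, hx⟩) h
  exact hs.smul_mono_of_nonneg (le_of_lt hc) hca.le hxc

lemma Bornology.IsVonNBounded.exists_gauge_sub_lt_subset [IsTopologicalAddGroup E]
    {D A : Set E} (hD : IsVonNBounded ℝ D) (hbal : Balanced ℝ D) (hconv : Convex ℝ D)
    (hAD : A ⊆ D) {x : E} (hx : x ∈ A) {V : Set E} (hV : V ∈ 𝓝 x) :
    ∃ ε > 0, {y | y ∈ A ∧ gauge D (y - x) < ε} ⊆ V := by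
  rw [← map_add_left_nhds_zero x] at hV
  obtain ⟨r, hr, hDr⟩ := (hD hV).exists_pos
  refine ⟨r⁻¹, inv_pos.2 hr, fun y ⟨hy, hgauge⟩ => ?_⟩
  have hyx : y - x ∈ r⁻¹ • D :=
    hbal.mem_smul_of_gauge_lt two_pos (hbal.sub_mem_two_smul hconv (hAD hy) (hAD hx)) hgauge
  have := smul_set_mono (hDr r (Real.norm_of_nonneg hr.le).ge) hyx
  rw [smul_smul, inv_mul_cancel₀ hr.ne', one_smul] at this
  simpa using this

lemma gaugeTopologyAgreesOn_of_forall {D A : Set E}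
    (hle : ∀ x ∈ A, ∀ V ∈ 𝓝 x, ∃ ε > 0, {y | y ∈ A ∧ gauge D (y - x) < ε} ⊆ V)
    (hge : ∀ x ∈ A, ∀ ε > 0, ∀ᶠ y in 𝓝 x, y ∈ A → gauge D (y - x) < ε) :
    GaugeTopologyAgreesOn D A := by
  refine fun x hx W => ⟨fun ⟨ε, hε, hW⟩ => ?_, fun ⟨V, hV, hVW⟩ => ?_⟩
  · exact ⟨_, hge x hx ε hε, fun y ⟨hyV, hyA⟩ => hW ⟨hyA, hyV hyA⟩⟩
  · obtain ⟨ε, hε, hεV⟩ := hle x hx V hV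
    exact ⟨ε, hε, fun y hy => hVW ⟨hεV hy, hy.1⟩⟩

def mackeyDisk (U : ℕ → Set E) (ρ : ℕ → ℝ) : Set E :=
  ⋂ n : ℕ, (((n : ℝ) + 1) * ρ n) • U n

section MackeyDisk

variable {U : ℕ → Set E} {ρ : ℕ → ℝ}

omit [TopologicalSpace E] in
lemma mackeyDisk_subset (n : ℕ) : mackeyDisk U ρ ⊆ (((n : ℝ) + 1) * ρ n) • U n :=
  iInter_subset _ n

omit [TopologicalSpace E] in
lemma convex_mackeyDisk (hconv : ∀ n, Convex ℝ (U n)) : Convex ℝ (mackeyDisk U ρ) :=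
  convex_iInter fun n => (hconv n).smul _

omit [TopologicalSpace E] in
lemma balanced_mackeyDisk (hbal : ∀ n, Balanced ℝ (U n)) : Balanced ℝ (mackeyDisk U ρ) :=
  balanced_iInter fun n => (hbal n).smul _

lemma isClosed_mackeyDisk [ContinuousConstSMul ℝ E] (hU : ∀ n, IsClosed (U n))
    (hρ : ∀ n, ρ n ≠ 0) : IsClosed (mackeyDisk U ρ) :=
  isClosed_iInter fun n => (hU n).smul_of_ne_zero (mul_ne_zero (by positivity) (hρ n))

lemma isVonNBounded_mackeyDisk (hbasis : (𝓝 0).HasBasis (fun _ => True) U)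
    (hbal : ∀ n, Balanced ℝ (U n)) : IsVonNBounded ℝ (mackeyDisk U ρ) := by
  rw [hbasis.isVonNBounded_iff]
  exact fun n _ => absorbs_iff_norm.2
    ⟨_, fun c hc => (mackeyDisk_subset n).trans ((hbal n).smul_mono hc)⟩

omit [TopologicalSpace E] in
lemma subset_mackeyDisk {A : Set E} (hbal : ∀ n, Balanced ℝ (U n)) (hρ : ∀ n, 0 ≤ ρ n)
    (hA : ∀ n, A ⊆ ρ n • U n) : A ⊆ mackeyDisk U ρ :=
  subset_iInter fun n => (hA n).trans <| (hbal n).smul_mono_of_nonneg (hρ n) <|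
    le_mul_of_one_le_left (hρ n) (by linarith [n.cast_nonneg (α := ℝ)])

omit [TopologicalSpace E] in
lemma sub_mem_smul_mackeyDisk {A : Set E} (hbal : ∀ n, Balanced ℝ (U n))
    (hconv : ∀ n, Convex ℝ (U n)) (hρ : ∀ n, 0 ≤ ρ n) (hA : ∀ n, A ⊆ ρ n • U n)
    {x y : E} (hx : x ∈ A) (hy : y ∈ A) {t : ℝ} (ht : 0 < t) {N : ℕ} (hN : 2 ≤ t * N)
    (hnear : ∀ n < N, y - x ∈ (t * ((n + 1) * ρ n)) • U n) :
    y - x ∈ t • mackeyDisk U ρ := by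
  rw [mackeyDisk, ← Units.val_mk0 ht.ne', ← Units.smul_def, smul_set_iInter]
  refine mem_iInter.2 fun n => ?_
  rw [Units.smul_def, Units.val_mk0, smul_smul]
  rcases lt_or_ge n N with hn | hn
  · exact hnear n hn
  · have h2 : y - x ∈ (2 * ρ n) • U n := by
      have := ((hbal n).smul (ρ n)).sub_mem_two_smul ((hconv n).smul (ρ n)) (hA n hy) (hA n hx)
      rwa [smul_smul] at this
    have hNn : (N : ℝ) ≤ n + 1 := by exact_mod_cast Nat.le_succ_of_le hn
    have := hρ n
    refine (hbal n).smul_mono_of_nonneg (by positivity) ?_ h2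
    calc 2 * ρ n ≤ t * N * ρ n := by gcongr
      _ ≤ t * ((n + 1) * ρ n) := by rw [← mul_assoc]; gcongr

lemma eventually_gauge_sub_mackeyDisk_lt [IsTopologicalAddGroup E] [ContinuousConstSMul ℝ E]
    {A : Set E} (hU : ∀ n, U n ∈ 𝓝 0) (hbal : ∀ n, Balanced ℝ (U n))
    (hconv : ∀ n, Convex ℝ (U n)) (hρ : ∀ n, 0 < ρ n) (hA : ∀ n, A ⊆ ρ n • U n)
    {x : E} (hx : x ∈ A) {ε : ℝ} (hε : 0 < ε) :
    ∀ᶠ y in 𝓝 x, y ∈ A → gauge (mackeyDisk U ρ) (y - x) < ε := by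
  obtain ⟨N, hN⟩ := exists_nat_ge (4 / ε)
  have hnear : ∀ᶠ y in 𝓝 x, ∀ n ∈ Iio N, y - x ∈ (ε / 2 * ((n + 1) * ρ n)) • U n := by
    refine (eventually_all_finite (finite_Iio N)).2 fun n _ => ?_
    have hc : ε / 2 * ((n + 1) * ρ n) ≠ 0 := by have := hρ n; positivity
    exact (tendsto_sub_nhds_zero_iff.2 tendsto_id).eventually_mem
      ((set_smul_mem_nhds_zero_iff hc).2 (hU n))
  filter_upwards [hnear] with y hy hyA
  have hN2 : 2 ≤ ε / 2 * N := by
    rw [div_le_iff₀ hε] at hN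
    linarith
  have hyx := sub_mem_smul_mackeyDisk hbal hconv (fun n => (hρ n).le) hA hx hyA (half_pos hε)
    hN2 hy
  calc gauge _ (y - x) ≤ ε / 2 := gauge_le_of_mem (half_pos hε).le hyx
    _ < ε := half_lt_self hε

end MackeyDisk

/-- Every metrizable real locally convex space satisfies the strict Mackey convergence
condition: for every bounded set `A` there exists a closed bounded disk `D ⊇ A` such
that the topology of the normed space `(E_D, ‖·‖_D)` agrees with the topology of `E`
on `A`. -/
theorem metrizable_strict_mackey
    [IsTopologicalAddGroup E] [ContinuousSMul ℝ E] [LocallyConvexSpace ℝ E]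
    [TopologicalSpace.MetrizableSpace E]
    (A : Set E) (hA : Bornology.IsVonNBounded ℝ A) :
    ∃ D : Set E, IsClosed D ∧ Bornology.IsVonNBounded ℝ D ∧ Convex ℝ D ∧
      Balanced ℝ D ∧ A ⊆ D ∧ GaugeTopologyAgreesOn D A := by
  obtain ⟨U, hU, hbasis⟩ := (nhds_hasBasis_absConvex_closed ℝ E).exists_antitone_subbasis
  choose hU0 hUcl hUabs using hU
  have hbal n : Balanced ℝ (U n) := (hUabs n).1
  have hconv n : Convex ℝ (U n) := (hUabs n).2
  choose ρ hρ hAρ using fun n => (hA (hU0 n)).exists_pos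
  have hAU n : A ⊆ ρ n • U n := hAρ n _ (Real.norm_of_nonneg (hρ n).le).ge
  have hD : IsVonNBounded ℝ (mackeyDisk U ρ) := isVonNBounded_mackeyDisk hbasis.toHasBasis hbal
  have hAD : A ⊆ mackeyDisk U ρ := subset_mackeyDisk hbal (fun n => (hρ n).le) hAU
  refine ⟨mackeyDisk U ρ, isClosed_mackeyDisk hUcl fun n => (hρ n).ne', hD,
    convex_mackeyDisk hconv, balanced_mackeyDisk hbal, hAD, ?_⟩
  exact gaugeTopologyAgreesOn_of_forall
    (fun x hx V hV => hD.exists_gauge_sub_lt_subset (balanced_mackeyDisk hbal)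
      (convex_mackeyDisk hconv) hAD hx hV)
    (fun x hx ε hε => eventually_gauge_sub_mackeyDisk_lt hU0 hbal hconv hρ hAU hx hε)
end

section
/- Let X be a real Banach space, J = [0,T], H : J × X × X → X and K : J × J × X → X as in the Picard–Lindelöf setup (H globally Lipschitz with constant L, K Lipschitz in the third variable with constant k₁, both continuous, and ‖H‖ ≤ H₀ bounded). Then the Picard iterates x_{m+1}(t) = x₀ + ∫₀ᵗ H(s, x_m(s), ∫₀ˢ K(s,r,x_m(r)) dr) ds, with x_{0}(t) ≡ x₀, converge uniformly on [0, η] for η small enough, and the limit solves the integral equation x(t) = x₀ + ∫₀ᵗ H(s, x(s), ∫₀ˢ K(s,r,x(r)) dr) ds. -/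
open MeasureTheory intervalIntegral Set NNReal

section aux
variable {X : Type*} [NormedAddCommGroup X] [NormedSpace ℝ X] [CompleteSpace X]
  (x₀ : X) (H : ℝ → X → X → X) (K : ℝ → ℝ → X → X)

noncomputable def picardP (z : ℝ → X) (t : ℝ) : X :=
  x₀ + ∫ s in (0:ℝ)..t, H s (z s) (∫ r in (0:ℝ)..s, K s r (z r))

variable {H K}

lemma picard_inner_cont (hKcont : Continuous (fun p : ℝ × ℝ × X => K p.1 p.2.1 p.2.2))
    {z : ℝ → X} (hz : Continuous z) :
    Continuous fun s => ∫ r in (0:ℝ)..s, K s r (z r) := by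
  apply intervalIntegral.continuous_parametric_intervalIntegral_of_continuous (μ := volume)
    ?_ continuous_id
  exact hKcont.comp (continuous_fst.prodMk (continuous_snd.prodMk (hz.comp continuous_snd)))

lemma picard_integrand_cont (hHcont : Continuous (fun p : ℝ × X × X => H p.1 p.2.1 p.2.2))
    (hKcont : Continuous (fun p : ℝ × ℝ × X => K p.1 p.2.1 p.2.2))
    {z : ℝ → X} (hz : Continuous z) :
    Continuous fun s => H s (z s) (∫ r in (0:ℝ)..s, K s r (z r)) :=
  hHcont.comp (continuous_id.prodMk (hz.prodMk (picard_inner_cont hKcont hz)))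

lemma picardP_cont (hHcont : Continuous (fun p : ℝ × X × X => H p.1 p.2.1 p.2.2))
    (hKcont : Continuous (fun p : ℝ × ℝ × X => K p.1 p.2.1 p.2.2))
    {z : ℝ → X} (hz : Continuous z) : Continuous (picardP x₀ H K z) :=
  continuous_const.add (intervalIntegral.continuous_primitive
    (fun _ _ => (picard_integrand_cont hHcont hKcont hz).intervalIntegrable _ _) 0)

lemma picardP_congr {η : ℝ} {z₁ z₂ : ℝ → X} (hzz : Set.EqOn z₁ z₂ (Icc 0 η))
    {t : ℝ} (ht : t ∈ Icc (0:ℝ) η) : picardP x₀ H K z₁ t = picardP x₀ H K z₂ t := by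
  unfold picardP
  congr 1
  apply intervalIntegral.integral_congr
  intro s hs
  rw [Set.uIcc_of_le ht.1] at hs
  have hsη : s ∈ Icc (0:ℝ) η := ⟨hs.1, hs.2.trans ht.2⟩
  show H s (z₁ s) (∫ r in (0:ℝ)..s, K s r (z₁ r)) = H s (z₂ s) (∫ r in (0:ℝ)..s, K s r (z₂ r))
  rw [hzz hsη]
  congr 1
  apply intervalIntegral.integral_congr
  intro r hr
  rw [Set.uIcc_of_le hs.1] at hr
  show K s r (z₁ r) = K s r (z₂ r)
  rw [hzz ⟨hr.1, hr.2.trans hsη.2⟩]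

lemma picardP_dist {T L k₁ : ℝ} (hL : 0 < L) (hk₁ : 0 < k₁)
    (hHcont : Continuous (fun p : ℝ × X × X => H p.1 p.2.1 p.2.2))
    (hKcont : Continuous (fun p : ℝ × ℝ × X => K p.1 p.2.1 p.2.2))
    (hHlip : ∀ t ∈ Set.Icc 0 T, ∀ x₁ y₁ x₂ y₂ : X,
      ‖H t x₁ y₁ - H t x₂ y₂‖ ≤ L * (‖x₁ - x₂‖ + ‖y₁ - y₂‖))
    (hKlip : ∀ t ∈ Set.Icc 0 T, ∀ s ∈ Set.Icc 0 T, ∀ u v : X,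
      ‖K t s u - K t s v‖ ≤ k₁ * ‖u - v‖)
    {η : ℝ} (hη0 : 0 ≤ η) (hηT : η ≤ T)
    {z w : ℝ → X} (hz : Continuous z) (hw : Continuous w)
    {D : ℝ} (hD : 0 ≤ D) (hzw : ∀ s, ‖z s - w s‖ ≤ D)
    {t : ℝ} (ht : t ∈ Icc (0:ℝ) η) :
    ‖picardP x₀ H K z t - picardP x₀ H K w t‖ ≤ L * (1 + k₁ * η) * η * D := by
  have hIz := picard_integrand_cont hHcont hKcont hz
  have hIw := picard_integrand_cont hHcont hKcont hw
  unfold picardP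
  have e1 : x₀ + (∫ s in (0:ℝ)..t, H s (z s) (∫ r in (0:ℝ)..s, K s r (z r)))
      - (x₀ + ∫ s in (0:ℝ)..t, H s (w s) (∫ r in (0:ℝ)..s, K s r (w r)))
      = ∫ s in (0:ℝ)..t, (H s (z s) (∫ r in (0:ℝ)..s, K s r (z r))
          - H s (w s) (∫ r in (0:ℝ)..s, K s r (w r))) := by
    rw [intervalIntegral.integral_sub (hIz.intervalIntegrable _ _) (hIw.intervalIntegrable _ _)]
    abel
  rw [e1]
  have key : ∀ s ∈ Set.uIoc (0:ℝ) t,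
      ‖H s (z s) (∫ r in (0:ℝ)..s, K s r (z r))
        - H s (w s) (∫ r in (0:ℝ)..s, K s r (w r))‖ ≤ L * ((1 + k₁ * η) * D) := by
    intro s hs
    rw [Set.uIoc_of_le ht.1] at hs
    have hsT : s ∈ Icc (0:ℝ) T := ⟨hs.1.le, hs.2.trans (ht.2.trans hηT)⟩
    have hsη : s ≤ η := hs.2.trans ht.2
    have inner : ‖(∫ r in (0:ℝ)..s, K s r (z r)) - ∫ r in (0:ℝ)..s, K s r (w r)‖
        ≤ k₁ * D * η := by
      have hcz : Continuous fun r => K s r (z r) :=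
        hKcont.comp (continuous_const.prodMk (continuous_id.prodMk hz))
      have hcw : Continuous fun r => K s r (w r) :=
        hKcont.comp (continuous_const.prodMk (continuous_id.prodMk hw))
      rw [← intervalIntegral.integral_sub (hcz.intervalIntegrable _ _)
        (hcw.intervalIntegrable _ _)]
      have := intervalIntegral.norm_integral_le_of_norm_le_const (a := 0) (b := s)
        (C := k₁ * D) (f := fun r => K s r (z r) - K s r (w r)) ?_
      · calc ‖∫ r in (0:ℝ)..s, (K s r (z r) - K s r (w r))‖ ≤ k₁ * D * |s - 0| := this
          _ ≤ k₁ * D * η := by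
              rw [sub_zero, abs_of_nonneg hs.1.le]
              exact mul_le_mul_of_nonneg_left hsη (by positivity)
      · intro r hr
        rw [Set.uIoc_of_le hs.1.le] at hr
        have hrT : r ∈ Icc (0:ℝ) T := ⟨hr.1.le, hr.2.trans hsT.2⟩
        calc ‖K s r (z r) - K s r (w r)‖ ≤ k₁ * ‖z r - w r‖ := hKlip s hsT r hrT _ _
          _ ≤ k₁ * D := mul_le_mul_of_nonneg_left (hzw r) hk₁.le
    calc ‖H s (z s) (∫ r in (0:ℝ)..s, K s r (z r))
          - H s (w s) (∫ r in (0:ℝ)..s, K s r (w r))‖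
        ≤ L * (‖z s - w s‖ + ‖(∫ r in (0:ℝ)..s, K s r (z r))
            - ∫ r in (0:ℝ)..s, K s r (w r)‖) := hHlip s hsT _ _ _ _
      _ ≤ L * (D + k₁ * D * η) := by
          apply mul_le_mul_of_nonneg_left (add_le_add (hzw s) inner) hL.le
      _ = L * ((1 + k₁ * η) * D) := by ring
  calc ‖∫ s in (0:ℝ)..t, (H s (z s) (∫ r in (0:ℝ)..s, K s r (z r))
          - H s (w s) (∫ r in (0:ℝ)..s, K s r (w r)))‖
      ≤ L * ((1 + k₁ * η) * D) * |t - 0| :=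
        intervalIntegral.norm_integral_le_of_norm_le_const key
    _ ≤ L * (1 + k₁ * η) * η * D := by
        rw [sub_zero, abs_of_nonneg ht.1]
        nlinarith [ht.2, mul_nonneg (mul_nonneg hL.le (by nlinarith : (0:ℝ) ≤ 1 + k₁ * η)) hD]

end aux
/-- Convergence of the Picard iterates for the Volterra integro-differential equation:
with `H` continuous, bounded by `H₀` and globally Lipschitz with constant `L`, and `K`
continuous and Lipschitz in the third variable with constant `k₁`, the iterates
`x_{m+1}(t) = x₀ + ∫_0^t H(s, x_m(s), ∫_0^s K(s,r,x_m(r)) dr) ds`, `x_0 ≡ x₀`,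
converge uniformly on `[0,η]` for `η` small enough, and the limit solves the
corresponding integral equation. -/
theorem picard_iterates_converge
    {X : Type*} [NormedAddCommGroup X] [NormedSpace ℝ X] [CompleteSpace X]
    (T : ℝ) (hT : 0 < T) (x₀ : X) (L k₁ H₀ : ℝ) (hL : 0 < L) (hk₁ : 0 < k₁)
    (hH₀ : 0 < H₀)
    (H : ℝ → X → X → X) (K : ℝ → ℝ → X → X)
    (hHcont : Continuous (fun p : ℝ × X × X => H p.1 p.2.1 p.2.2))
    (hKcont : Continuous (fun p : ℝ × ℝ × X => K p.1 p.2.1 p.2.2))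
    (hHbound : ∀ t ∈ Set.Icc 0 T, ∀ x y : X, ‖H t x y‖ ≤ H₀)
    (hHlip : ∀ t ∈ Set.Icc 0 T, ∀ x₁ y₁ x₂ y₂ : X,
      ‖H t x₁ y₁ - H t x₂ y₂‖ ≤ L * (‖x₁ - x₂‖ + ‖y₁ - y₂‖))
    (hKlip : ∀ t ∈ Set.Icc 0 T, ∀ s ∈ Set.Icc 0 T, ∀ u v : X,
      ‖K t s u - K t s v‖ ≤ k₁ * ‖u - v‖) :
    ∃ η > 0, η ≤ T ∧
      ∃ x : ℝ → X,
        TendstoUniformlyOn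
          (fun m => (fun (z : ℝ → X) (t : ℝ) =>
              x₀ + ∫ s in (0:ℝ)..t,
                H s (z s) (∫ r in (0:ℝ)..s, K s r (z r)))^[m] (fun _ => x₀))
          x Filter.atTop (Set.Icc 0 η) ∧
        ∀ t ∈ Set.Icc 0 η,
          x t = x₀ + ∫ s in (0:ℝ)..t,
            H s (x s) (∫ r in (0:ℝ)..s, K s r (x r)) := by
  have hfun : (fun (z : ℝ → X) (t : ℝ) =>
      x₀ + ∫ s in (0:ℝ)..t, H s (z s) (∫ r in (0:ℝ)..s, K s r (z r))) = picardP x₀ H K := rfl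
  set η : ℝ := min T (1 / (2 * L * (1 + k₁ * T))) with hηdef
  have hkT : (0:ℝ) < 1 + k₁ * T := by nlinarith
  have hηpos : 0 < η := lt_min hT (by positivity)
  have hηT : η ≤ T := min_le_left _ _
  have hle : (0:ℝ) ≤ η := hηpos.le
  have hc : L * (1 + k₁ * η) * η ≤ 1 / 2 := by
    have h1 : L * (1 + k₁ * η) * η ≤ L * (1 + k₁ * T) * η := by
      nlinarith [mul_nonneg (mul_nonneg hL.le hle) (mul_nonneg hk₁.le (sub_nonneg.2 hηT))]
    have h2 : L * (1 + k₁ * T) * η ≤ L * (1 + k₁ * T) * (1 / (2 * L * (1 + k₁ * T))) :=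
      mul_le_mul_of_nonneg_left (min_le_right _ _) (by positivity)
    have h3 : L * (1 + k₁ * T) * (1 / (2 * L * (1 + k₁ * T))) = 1 / 2 := by
      field_simp
    linarith
  let e : C(Icc (0:ℝ) η, X) → ℝ → X := fun f => IccExtend hle f
  have he_cont : ∀ f : C(Icc (0:ℝ) η, X), Continuous (e f) := fun f =>
    f.continuous.comp continuous_projIcc
  have : Nonempty C(Icc (0:ℝ) η, X) := ⟨ContinuousMap.const _ x₀⟩
  let Q : C(Icc (0:ℝ) η, X) → C(Icc (0:ℝ) η, X) := fun f =>
    ⟨fun t => picardP x₀ H K (e f) t.1,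
      (picardP_cont x₀ hHcont hKcont (he_cont f)).comp continuous_subtype_val⟩
  have hQdist : ∀ f g : C(Icc (0:ℝ) η, X), dist (Q f) (Q g) ≤ (1/2 : ℝ) * dist f g := by
    intro f g
    rw [ContinuousMap.dist_le (by positivity)]
    intro t
    have hzw : ∀ s, ‖e f s - e g s‖ ≤ dist f g := by
      intro s
      rw [← dist_eq_norm]
      exact ContinuousMap.dist_apply_le_dist _
    calc dist (Q f t) (Q g t) = ‖picardP x₀ H K (e f) t.1 - picardP x₀ H K (e g) t.1‖ :=
          dist_eq_norm _ _
      _ ≤ L * (1 + k₁ * η) * η * dist f g :=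
          picardP_dist x₀ hL hk₁ hHcont hKcont hHlip hKlip hle hηT (he_cont f) (he_cont g)
            dist_nonneg hzw t.2
      _ ≤ (1/2) * dist f g := mul_le_mul_of_nonneg_right hc dist_nonneg
  have hQ : ContractingWith (1/2 : ℝ≥0) Q := by
    constructor
    · rw [← NNReal.coe_lt_coe]
      norm_num
    · apply LipschitzWith.of_dist_le_mul
      intro f g
      refine (hQdist f g).trans_eq ?_
      norm_num
  set xstar := ContractingWith.fixedPoint Q hQ with hxstar
  have iter_claim : ∀ m : ℕ, Continuous ((picardP x₀ H K)^[m] (fun _ => x₀)) ∧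
      ∀ t, ∀ ht : t ∈ Icc (0:ℝ) η,
        ((picardP x₀ H K)^[m] (fun _ => x₀)) t
          = (Q^[m] (ContinuousMap.const _ x₀)) ⟨t, ht⟩ := by
    intro m
    induction m with
    | zero => exact ⟨continuous_const, fun t ht => rfl⟩
    | succ m ih =>
      constructor
      · rw [Function.iterate_succ_apply']
        exact picardP_cont x₀ hHcont hKcont ih.1
      · intro t ht
        rw [Function.iterate_succ_apply', Function.iterate_succ_apply']
        have hh : (Q (Q^[m] (ContinuousMap.const _ x₀))) ⟨t, ht⟩
            = picardP x₀ H K (e (Q^[m] (ContinuousMap.const _ x₀))) t := rfl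
        rw [hh]
        exact picardP_congr x₀
          (fun s hs => (ih.2 s hs).trans (IccExtend_of_mem hle _ hs).symm) ht
  refine ⟨η, hηpos, hηT, e xstar, ?_, ?_⟩
  · rw [hfun, Metric.tendstoUniformlyOn_iff]
    intro ε hε
    have htend := hQ.tendsto_iterate_fixedPoint (ContinuousMap.const _ x₀)
    filter_upwards [Metric.tendsto_nhds.mp htend ε hε] with m hm t ht
    have h1 : e xstar t = xstar ⟨t, ht⟩ := IccExtend_of_mem hle _ ht
    rw [h1, (iter_claim m).2 t ht]
    calc dist (xstar ⟨t, ht⟩) ((Q^[m] (ContinuousMap.const _ x₀)) ⟨t, ht⟩)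
        ≤ dist xstar (Q^[m] (ContinuousMap.const _ x₀)) := ContinuousMap.dist_apply_le_dist _
      _ = dist (Q^[m] (ContinuousMap.const _ x₀)) xstar := dist_comm _ _
      _ < ε := hm
  · intro t ht
    have h1 : e xstar t = xstar ⟨t, ht⟩ := IccExtend_of_mem hle _ ht
    have h2 : Q xstar = xstar := hQ.fixedPoint_isFixedPt
    rw [h1, show xstar ⟨t, ht⟩ = (Q xstar) ⟨t, ht⟩ by rw [h2]]
    rfl
end

section
/- Let E be a locally complete, locally convex Hausdorff space, B a closed bounded disk, J = [0,T], and f : J → E_B continuous for ‖·‖_B with values in H₀·B for some H₀ > 0. Then the function x(t) = x₀ + ∫₀ᵗ f(s) ds (Bochner integral in (E_B, ‖·‖_B)) is differentiable in E with derivative f(t), where differentiability is with respect to the topology of E. -/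
/-! The Bochner integral is taken in the Banach space `X ≅ (E_B, ‖·‖_B)`, where the fundamental
theorem of calculus makes `x` differentiable with derivative `f t` for the norm `‖·‖_B`. Since `B` is
bounded in `E`, the inclusion `E_B → E` is continuous, so the difference quotients, which converge
in `‖·‖_B`, also converge in the topology of `E`. -/

open MeasureTheory intervalIntegral Pointwise Filter Topology Set

-- Positivity of the gauge stands in for absorbency: `sInf ∅ = 0`, so `0 < gauge s x` forces
-- `x ∈ r • s` for some `r > 0`.
theorem exists_lt_mem_smul_of_gauge_pos_of_gauge_lt {E : Type*} [AddCommGroup E] [Module ℝ E]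
    {s : Set E} {x : E} {a : ℝ} (hpos : 0 < gauge s x) (h : gauge s x < a) :
    ∃ b, 0 < b ∧ b < a ∧ x ∈ b • s := by
  have hne : {r : ℝ | 0 < r ∧ x ∈ r • s}.Nonempty := by
    rw [nonempty_iff_ne_empty]
    intro hempty
    rw [gauge, hempty, Real.sInf_empty] at hpos
    exact hpos.false
  obtain ⟨b, ⟨hb, hx⟩, hba⟩ := exists_lt_of_csInf_lt hne h
  exact ⟨b, hb, hba, hx⟩

theorem LinearMap.continuous_of_norm_eq_gauge {E : Type*} [AddCommGroup E] [Module ℝ E]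
    [TopologicalSpace E] [IsTopologicalAddGroup E] {B : Set E}
    (hbd : Bornology.IsVonNBounded ℝ B) {X : Type*} [NormedAddCommGroup X] [NormedSpace ℝ X]
    (φ : X →ₗ[ℝ] E) (hiso : ∀ u : X, ‖u‖ = gauge B (φ u)) :
    Continuous φ := by
  refine continuous_of_continuousAt_zero φ.toAddMonoidHom fun V hV => ?_
  rw [φ.toAddMonoidHom_coe, map_zero] at hV
  obtain ⟨ε, hε, hsmall⟩ :=
    Metric.eventually_nhds_iff.1 (eventually_nhdsWithin_iff.1 (hbd hV).eventually_nhdsNE_zero)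
  refine mem_map.2 (mem_of_superset (Metric.ball_mem_nhds 0 hε) fun u hu => ?_)
  rcases eq_or_ne u 0 with rfl | hu0
  · simpa using mem_of_mem_nhds hV
  have hgauge_pos : 0 < gauge B (φ u) := hiso u ▸ norm_pos_iff.2 hu0
  have hgauge_lt : gauge B (φ u) < ε := hiso u ▸ mem_ball_zero_iff.1 hu
  obtain ⟨c, hc, hcε, v, hv, hφu⟩ :=
    exists_lt_mem_smul_of_gauge_pos_of_gauge_lt hgauge_pos hgauge_lt
  have hmaps : MapsTo (c • ·) B V :=
    hsmall (by rwa [dist_zero_right, Real.norm_of_nonneg hc.le]) hc.ne'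
  simpa [hφu] using hmaps hv

theorem hasDerivAt_integral_of_continuousOn_Icc {X : Type*} [NormedAddCommGroup X]
    [NormedSpace ℝ X] [CompleteSpace X] {f : ℝ → X} {a b t : ℝ}
    (hf : ContinuousOn f (Icc a b)) (ht : t ∈ Ioo a b) :
    HasDerivAt (fun u => ∫ s in a..u, f s) (f t) t := by
  have hnhds : Icc a b ∈ 𝓝 t := Icc_mem_nhds ht.1 ht.2
  have hsub : uIcc a t ⊆ Icc a b :=
    uIcc_subset_Icc (left_mem_Icc.2 (ht.1.trans ht.2).le) (Ioo_subset_Icc_self ht)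
  exact integral_hasDerivAt_right ((hf.mono hsub).intervalIntegrable)
    ⟨Icc a b, hnhds, hf.aestronglyMeasurable measurableSet_Icc⟩ (hf.continuousAt hnhds)

theorem HasDerivAt.tendsto_slope_map {X : Type*} [NormedAddCommGroup X] [NormedSpace ℝ X]
    {E : Type*} [AddCommGroup E] [Module ℝ E] [TopologicalSpace E]
    {F : ℝ → X} {F' : X} {t : ℝ} (hF : HasDerivAt F F' t) (φ : X →L[ℝ] E) :
    Tendsto (fun h : ℝ => h⁻¹ • (φ (F (t + h)) - φ (F t))) (𝓝[≠] 0) (𝓝 (φ F')) := by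
  simpa only [Function.comp_def, ← map_sub, ← map_smul] using
    (φ.continuous.tendsto F').comp (hasDerivAt_iff_tendsto_slope_zero.1 hF)

theorem integral_differentiable_in_E_general
    {E : Type*} [AddCommGroup E] [Module ℝ E] [TopologicalSpace E]
    [IsTopologicalAddGroup E]
    (B : Set E)
    (hbd : Bornology.IsVonNBounded ℝ B)
    {X : Type*} [NormedAddCommGroup X] [NormedSpace ℝ X] [CompleteSpace X]
    (φ : X →ₗ[ℝ] E) (hiso : ∀ u : X, ‖u‖ = gauge B (φ u))
    (T : ℝ) (x₀ : X)
    (f : ℝ → X) (hf : ContinuousOn f (Set.Icc 0 T)) :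
    ∀ t ∈ Set.Ioo 0 T,
      Filter.Tendsto
        (fun h : ℝ =>
          h⁻¹ • (φ (x₀ + ∫ s in (0:ℝ)..(t + h), f s) - φ (x₀ + ∫ s in (0:ℝ)..t, f s)))
        (nhdsWithin 0 {(0:ℝ)}ᶜ) (nhds (φ (f t))) := by
  intro t ht
  have hx : HasDerivAt (fun u => x₀ + ∫ s in (0:ℝ)..u, f s) (f t) t :=
    (hasDerivAt_integral_of_continuousOn_Icc hf ht).const_add x₀
  exact hx.tendsto_slope_map ⟨φ, φ.continuous_of_norm_eq_gauge hbd hiso⟩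

/-- Let `E` be a locally complete real locally convex Hausdorff space and `B` a closed
bounded disk; local completeness at `B` is encoded by a real Banach space `X` together
with a linear map `φ : X → E` which is an isometry of `X` onto the span of `B` equipped
with the gauge norm `‖·‖_B`.  If `f : [0,T] → E_B` is `‖·‖_B`-continuous with values in
`H₀ • B`, then `x(t) = x₀ + ∫_0^t f(s) ds` (Bochner integral in `(E_B,‖·‖_B)`) is
differentiable in the topology of `E` with derivative `f(t)`. -/
theorem integral_differentiable_in_E
    {E : Type*} [AddCommGroup E] [Module ℝ E] [TopologicalSpace E]
    [IsTopologicalAddGroup E] [ContinuousSMul ℝ E] [LocallyConvexSpace ℝ E] [T2Space E]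
    (B : Set E) (hclosed : IsClosed B) (hconv : Convex ℝ B) (hbal : Balanced ℝ B)
    (hbd : Bornology.IsVonNBounded ℝ B)
    {X : Type*} [NormedAddCommGroup X] [NormedSpace ℝ X] [CompleteSpace X]
    (φ : X →ₗ[ℝ] E) (hiso : ∀ u : X, ‖u‖ = gauge B (φ u))
    (hrange : Set.range φ = (Submodule.span ℝ B : Set E))
    (T : ℝ) (hT : 0 < T) (H₀ : ℝ) (hH₀ : 0 < H₀) (x₀ : X)
    (f : ℝ → X) (hf : ContinuousOn f (Set.Icc 0 T))
    (hfB : ∀ t ∈ Set.Icc 0 T, φ (f t) ∈ H₀ • B) :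
    ∀ t ∈ Set.Ioo 0 T,
      Filter.Tendsto
        (fun h : ℝ =>
          h⁻¹ • (φ (x₀ + ∫ s in (0:ℝ)..(t + h), f s) - φ (x₀ + ∫ s in (0:ℝ)..t, f s)))
        (nhdsWithin 0 {(0:ℝ)}ᶜ) (nhds (φ (f t))) :=
  integral_differentiable_in_E_general B hbd φ hiso T x₀ f hf
end
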